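/- arXiv:2411.16146 — 4 statements merged into one kernel-verified Lean document; each statement's English description precedes it below -/
import Mathlib

section
/- Let π : R → S be a surjective homomorphism of commutative rings and let v be a pre-valuation on R with associated p-filtration (a_{v,n}). Then the function v_S : S → ℕ ∪ {∞} defined by v_S(z) = sup{ v(y) : y ∈ R, π(y) = z } is a pre-valuation on S, and its associated p-filtration is given by a_{v_S,n} = π(a_{v,n}) for all n ≥ 0. -/
/-- A pre-valuation on a commutative ring `R`. -/
structure PreVal (R : Type*) [CommRing R] where
  v : R → ℕ∞
  map_zero : v 0 = ⊤
  mul_le : ∀ x y : R, v x + v y ≤ v (x * y)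
  min_le_add : ∀ x y : R, min (v x) (v y) ≤ v (x + y)
  add_eq : ∀ x y : R, v x ≠ v y → v (x + y) = min (v x) (v y)

/-!
The equality case of the ultrametric axiom follows from the two inequalities:
`v (-x) ≥ v (-1) + v x ≥ v x`, so `v x = v ((x + y) - y) ≥ min (v (x + y)) (v y)`, which forces
`v (x + y) = v x` as soon as `v x < v y`. For the fibre supremum `v_S` the two inequalities pass
to suprema over preimages. Since `n + 1 ≤ a ↔ n < a` in `ℕ∞`, a finite lower bound `n ≤ v_S z`
is already witnessed by a single preimage of `z`, which identifies the filtrations.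
-/

namespace PreVal

section OfMulLeMinLe

variable {R : Type*} [CommRing R] {w : R → ℕ∞}

theorem le_apply_neg_of_mul_le (hmul : ∀ x y, w x + w y ≤ w (x * y)) (x : R) : w x ≤ w (-x) :=
  calc w x ≤ w (-1) + w x := le_add_self
    _ ≤ w (-1 * x) := hmul _ _
    _ = w (-x) := by rw [neg_one_mul]

theorem apply_add_eq_left_of_lt (hmul : ∀ x y, w x + w y ≤ w (x * y))
    (hmin : ∀ x y, min (w x) (w y) ≤ w (x + y)) {x y : R} (h : w x < w y) :
    w (x + y) = w x := by
  refine le_antisymm (not_lt.mp fun hlt => ?_) (by simpa [min_eq_left h.le] using hmin x y)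
  have hlt_min : w x < min (w (x + y)) (w (-y)) :=
    lt_min hlt (h.trans_le (le_apply_neg_of_mul_le hmul y))
  have hle := hmin (x + y) (-y)
  rw [add_neg_cancel_right] at hle
  exact (hlt_min.trans_le hle).false

theorem apply_add_eq_min_of_ne (hmul : ∀ x y, w x + w y ≤ w (x * y))
    (hmin : ∀ x y, min (w x) (w y) ≤ w (x + y)) {x y : R} (h : w x ≠ w y) :
    w (x + y) = min (w x) (w y) := by
  rcases h.lt_or_gt with h | h
  · rw [min_eq_left h.le, apply_add_eq_left_of_lt hmul hmin h]
  · rw [min_eq_right h.le, add_comm, apply_add_eq_left_of_lt hmul hmin h]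

def ofMulLeMinLe (w : R → ℕ∞) (map_zero : w 0 = ⊤) (hmul : ∀ x y, w x + w y ≤ w (x * y))
    (hmin : ∀ x y, min (w x) (w y) ≤ w (x + y)) : PreVal R :=
  ⟨w, map_zero, hmul, hmin, fun _ _ => apply_add_eq_min_of_ne hmul hmin⟩

end OfMulLeMinLe

section Map

variable {R S : Type*} [CommRing R] [CommRing S] (v : PreVal R) (π : R →+* S)

noncomputable def fiberSup (z : S) : ℕ∞ := ⨆ (y : R) (_ : π y = z), v.v y

variable {v π}

theorem le_fiberSup (x : R) : v.v x ≤ v.fiberSup π (π x) :=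
  le_iSup₂ (f := fun y (_ : π y = π x) => v.v y) x rfl

theorem fiberSup_zero : v.fiberSup π 0 = ⊤ := by
  simpa only [v.map_zero, _root_.map_zero, top_le_iff] using le_fiberSup (v := v) (π := π) 0

theorem fiberSup_add_fiberSup_le (hπ : Function.Surjective π) (z₁ z₂ : S) :
    v.fiberSup π z₁ + v.fiberSup π z₂ ≤ v.fiberSup π (z₁ * z₂) :=
  ENat.biSup_add_biSup_le' (hπ z₁) (hπ z₂) fun x hx y hy =>
    (v.mul_le x y).trans <| by rw [← hx, ← hy, ← map_mul]; exact le_fiberSup _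

theorem min_fiberSup_le (z₁ z₂ : S) :
    min (v.fiberSup π z₁) (v.fiberSup π z₂) ≤ v.fiberSup π (z₁ + z₂) := by
  rw [fiberSup, fiberSup, iSup₂_inf_eq]
  simp_rw [inf_iSup₂_eq]
  exact iSup₂_le fun x hx => iSup₂_le fun y hy =>
    (v.min_le_add x y).trans <| by rw [← hx, ← hy, ← map_add]; exact le_fiberSup _

theorem natCast_le_fiberSup_iff (hπ : Function.Surjective π) (n : ℕ) (z : S) :
    (n : ℕ∞) ≤ v.fiberSup π z ↔ ∃ x, π x = z ∧ (n : ℕ∞) ≤ v.v x := by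
  refine ⟨fun hn => ?_, fun ⟨x, hx, hn⟩ => hx ▸ hn.trans (le_fiberSup x)⟩
  cases n with
  | zero =>
    obtain ⟨x, hx⟩ := hπ z
    exact ⟨x, hx, by simp⟩
  | succ m =>
    push_cast at hn ⊢
    simpa only [ENat.add_one_le_iff (ENat.natCast_ne_top m), fiberSup, lt_iSup_iff,
      exists_prop] using hn

variable (v π)

noncomputable def map (hπ : Function.Surjective π) : PreVal S :=
  ofMulLeMinLe (v.fiberSup π) fiberSup_zero (fiberSup_add_fiberSup_le hπ) min_fiberSup_le

end Map

end PreVal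

/-- If `π : R → S` is a surjective ring homomorphism and `v` is a
pre-valuation on `R`, then `v_S(z) = sup { v y : π y = z }` is a pre-valuation on `S`
whose associated filtration is `a_{v_S,n} = π(a_{v,n})`. -/
theorem stmt5 {R S : Type*} [CommRing R] [CommRing S] (π : R →+* S)
    (hπ : Function.Surjective π) (v : PreVal R) :
    ∃ w : PreVal S,
      (∀ z : S, w.v z = sSup (v.v '' {y : R | π y = z})) ∧
      ∀ n : ℕ, {z : S | (n : ℕ∞) ≤ w.v z} = π '' {x : R | (n : ℕ∞) ≤ v.v x} :=
  ⟨v.map π hπ, fun _ => sSup_image.symm, fun n => Set.ext fun z =>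
    (PreVal.natCast_le_fiberSup_iff hπ n z).trans <| by
      simp only [Set.mem_image, Set.mem_ofPred_eq, and_comm]⟩
end

section
/- Let R be a commutative ring, v a pre-valuation on R, d ∈ ℕ, and s ∈ R. Let v^♯ be the pre-valuation on R[x] defined by v^♯(Σ_i c_i x^i) = min_i ( v(c_i) + i·d ), and let v^+ be the pushforward of v^♯ along the evaluation map R[x] → R sending x to s, i.e., v^+(u) = sup{ v^♯(y) : y ∈ R[x], y(s) = u }. Then: (1) v^+(u) ≥ v(u) for all u ∈ R; (2) if d > v(s), then v^+(s) ≥ d > v(s), so v^+ ≠ v; (3) if d ≤ v(s), then v^+ = v. -/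
/-- The pre-valuation `v^♯` on `R[x]`: `v^♯(Σ c_i x^i) = min_i (v(c_i) + i·d)`. -/
noncomputable def vsharp {R : Type*} [CommRing R] (v : PreVal R) (d : ℕ)
    (p : Polynomial R) : ℕ∞ :=
  ⨅ i : ℕ, v.v (p.coeff i) + ((i * d : ℕ) : ℕ∞)

/-- The pushforward `v^+` of `v^♯` along the evaluation map `R[x] → R`, `x ↦ s`:
`v^+(u) = sup { v^♯(y) : y(s) = u }`. -/
noncomputable def vplus {R : Type*} [CommRing R] (v : PreVal R) (s : R) (d : ℕ)
    (u : R) : ℕ∞ :=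
  sSup (vsharp v d '' {p : Polynomial R | Polynomial.eval s p = u})

/-! Constants `C u` show `v ≤ v⁺`, and `X` represents `s` with `v^♯(X) ≥ d`. When `d ≤ v(s)`, each
monomial satisfies `v(c sⁱ) ≥ v(c) + i·v(s) ≥ v(c) + i·d`, so the ultrametric inequality gives
`v^♯(p) ≤ v(p(s))` for every polynomial `p`, i.e. `v⁺ ≤ v`. -/

open Polynomial

namespace PreVal

variable {R : Type*} [CommRing R] (v : PreVal R)

theorem iInf_le_sum {ι : Type*} (t : Finset ι) (f : ι → R) :
    ⨅ i ∈ t, v.v (f i) ≤ v.v (∑ i ∈ t, f i) := by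
  classical
  induction t using Finset.induction_on with
  | empty => simp [v.map_zero]
  | insert a t ha ih =>
    rw [Finset.sum_insert ha, Finset.iInf_insert]
    exact (min_le_min le_rfl ih).trans (v.min_le_add _ _)

theorem nsmul_le_pow (s : R) (n : ℕ) : n • v.v s ≤ v.v (s ^ n) := by
  induction n with
  | zero => simp
  | succ n ih =>
    rw [succ_nsmul, pow_succ]
    exact (add_le_add ih le_rfl).trans (v.mul_le _ _)

end PreVal

section

variable {R : Type*} [CommRing R] (v : PreVal R) (d : ℕ)

theorem vsharp_C (u : R) : vsharp v d (C u) = v.v u := by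
  refine le_antisymm ((iInf_le _ 0).trans_eq (by simp)) ?_
  refine le_iInf fun i => ?_
  rcases eq_or_ne i 0 with rfl | hi
  · simp
  · simp [coeff_C, hi, v.map_zero]

theorem le_vsharp_X : (d : ℕ∞) ≤ vsharp v d X := by
  refine le_iInf fun i => ?_
  rcases eq_or_ne i 1 with rfl | hi
  · simp
  · simp [coeff_X, Ne.symm hi, v.map_zero]

theorem vsharp_le_eval {s : R} (hd : (d : ℕ∞) ≤ v.v s) (p : R[X]) :
    vsharp v d p ≤ v.v (p.eval s) := by
  rw [eval_eq_sum_range]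
  refine le_trans (le_iInf₂ fun i _ => ?_) (v.iInf_le_sum _ _)
  have hpow : ((i * d : ℕ) : ℕ∞) ≤ v.v (s ^ i) := by
    simpa [nsmul_eq_mul] using (nsmul_le_nsmul_right hd i).trans (v.nsmul_le_pow s i)
  exact (iInf_le _ i).trans ((add_le_add le_rfl hpow).trans (v.mul_le _ _))

theorem vsharp_le_vplus_eval (s : R) (p : R[X]) : vsharp v d p ≤ vplus v s d (p.eval s) :=
  le_sSup ⟨p, rfl, rfl⟩

theorem le_vplus (s u : R) : v.v u ≤ vplus v s d u := by
  simpa [vsharp_C] using vsharp_le_vplus_eval v d s (C u)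

theorem vplus_le {s : R} (hd : (d : ℕ∞) ≤ v.v s) (u : R) : vplus v s d u ≤ v.v u :=
  sSup_le <| by
    rintro _ ⟨p, rfl, rfl⟩
    exact vsharp_le_eval v d hd p

end

/-- (1) `v⁺ ≥ v`; (2) if `d > v s` then `v⁺ s ≥ d > v s`, so `v⁺ ≠ v`;
(3) if `d ≤ v s` then `v⁺ = v`. -/
theorem stmt10 {R : Type*} [CommRing R] (v : PreVal R) (s : R) (d : ℕ) :
    (∀ u : R, v.v u ≤ vplus v s d u) ∧
    (v.v s < (d : ℕ∞) → (d : ℕ∞) ≤ vplus v s d s ∧ vplus v s d ≠ v.v) ∧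
    ((d : ℕ∞) ≤ v.v s → vplus v s d = v.v) := by
  refine ⟨le_vplus v d s, fun hlt => ?_, fun hd => ?_⟩
  · have hX : (d : ℕ∞) ≤ vplus v s d s := by
      simpa using (le_vsharp_X v d).trans (vsharp_le_vplus_eval v d s X)
    exact ⟨hX, fun h => (h ▸ hX).not_gt hlt⟩
  · exact funext fun u => (vplus_le v d hd u).antisymm (le_vplus v d s u)
end

section
/- Let k be a field, let R be a commutative k-algebra, let G be a finite group acting on R by k-algebra automorphisms, and let v be a valuation on R such that v(σ(u)) = v(u) for all u ∈ R and σ ∈ G. Suppose u = u_1 + ⋯ + u_m in R, where there are pairwise distinct group homomorphisms χ_1, …, χ_m : G → kˣ such that σ(u_i) = χ_i(σ)·u_i for all σ ∈ G and 1 ≤ i ≤ m. Then v(u) = min{ v(u_i) : 1 ≤ i ≤ m }. -/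
structure ValOn (R : Type*) [CommRing R] where
  v : R → ℕ∞
  mul_eq : ∀ x y : R, v (x * y) = v x + v y
  min_le_add : ∀ x y : R, min (v x) (v y) ≤ v (x + y)
  add_eq : ∀ x y : R, v x ≠ v y → v (x + y) = min (v x) (v y)
  top_iff : ∀ x : R, v x = ⊤ ↔ x = 0

section aux
variable {R : Type*} [CommRing R] (v : ValOn R)

lemma ValOn.smul_eq (k : Type*) [Field k] [Algebra k R] (c : k) (hc : c ≠ 0) (x : R) :
    v.v (c • x) = v.v x := by
  by_cases hx : x = 0
  · simp [hx]
  · have hx' : v.v x ≠ ⊤ := fun h => hx ((v.top_iff x).mp h)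
    have h1 : v.v (c • x) = v.v (algebraMap k R c) + v.v x := by
      rw [Algebra.smul_def, v.mul_eq]
    have h2 : x = c⁻¹ • (c • x) := by rw [smul_smul, inv_mul_cancel₀ hc, one_smul]
    have h3 : v.v x = v.v (algebraMap k R c⁻¹) + (v.v (algebraMap k R c) + v.v x) := by
      conv_lhs => rw [h2, Algebra.smul_def, v.mul_eq, h1]
    have h4 : (v.v (algebraMap k R c⁻¹) + v.v (algebraMap k R c)) + v.v x
        = 0 + v.v x := by rw [zero_add, add_assoc]; exact h3.symm
    have h5 := WithTop.add_right_cancel hx' h4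
    have h6 : v.v (algebraMap k R c) = 0 := (add_eq_zero.mp h5).2
    rw [h1, h6, zero_add]

lemma ValOn.neg_eq (k : Type*) [Field k] [Algebra k R] (x : R) : v.v (-x) = v.v x := by
  have := v.smul_eq k (-1 : k) (by norm_num) x
  simpa using this

lemma ValOn.inf_le_sum {ι : Type*} (u : ι → R) (s : Finset ι) :
    s.inf (fun i => v.v (u i)) ≤ v.v (∑ i ∈ s, u i) := by
  induction s using Finset.cons_induction with
  | empty => simp [(v.top_iff 0).mpr rfl]
  | cons a t ha ih =>
      rw [Finset.sum_cons, Finset.inf_cons]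
      exact le_trans (min_le_min le_rfl ih) (v.min_le_add _ _)

end aux

section core
variable {k R G : Type*} [Field k] [CommRing R] [Algebra k R] [Group G]

lemma stmt11_core (φ : G →* (R ≃ₐ[k] R)) (v : ValOn R)
    (hinv : ∀ (σ : G) (x : R), v.v (φ σ x) = v.v x)
    {ι : Type*} [DecidableEq ι] (s : Finset ι) :
    ∀ (u : ι → R) (χ : ι → (G →* kˣ)), Function.Injective χ →
    (∀ (i : ι) (σ : G), φ σ (u i) = (χ i σ : k) • u i) →
    v.v (∑ i ∈ s, u i) = s.inf (fun i => v.v (u i)) := by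
  induction s using Finset.strongInduction with
  | _ s ih =>
  intro u χ hdist hsemi
  rcases s.eq_empty_or_nonempty with rfl | hs
  · simp [(v.top_iff 0).mpr rfl]
  refine le_antisymm ?_ (v.inf_le_sum u s)
  by_contra hlt
  push_neg at hlt
  obtain ⟨i0, hi0s, hi0⟩ := Finset.exists_mem_eq_inf s hs (fun i => v.v (u i))
  by_cases hcard : ∃ j ∈ s, j ≠ i0
  · obtain ⟨j, hjs, hji⟩ := hcard
    have hχ : χ i0 ≠ χ j := fun h => hji (hdist h).symm
    obtain ⟨σ, hσ⟩ : ∃ σ, (χ i0) σ ≠ (χ j) σ := by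
      by_contra h; push_neg at h; exact hχ (MonoidHom.ext h)
    have hsemi' : ∀ (i : ι) (τ : G),
        φ τ (((χ i σ : k) - (χ j σ : k)) • u i)
          = (χ i τ : k) • (((χ i σ : k) - (χ j σ : k)) • u i) := by
      intro i τ
      rw [map_smul, hsemi]
      exact smul_comm _ _ _
    have hkey := ih (s.erase j) (Finset.erase_ssubset hjs)
      (fun i => ((χ i σ : k) - (χ j σ : k)) • u i) χ hdist hsemi'
    have hj0 : ((χ j σ : k) - (χ j σ : k)) • u j = 0 := by simp
    have hsum : ∑ i ∈ s.erase j, ((χ i σ : k) - (χ j σ : k)) • u i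
        = φ σ (∑ i ∈ s, u i) - (χ j σ : k) • ∑ i ∈ s, u i := by
      have e1 : ∑ i ∈ s.erase j, ((χ i σ : k) - (χ j σ : k)) • u i
          = ∑ i ∈ s, ((χ i σ : k) - (χ j σ : k)) • u i := Finset.sum_erase s hj0
      rw [e1, map_sum, Finset.smul_sum, ← Finset.sum_sub_distrib]
      refine Finset.sum_congr rfl fun i _ => ?_
      rw [hsemi, sub_smul]
    have hge : v.v (∑ i ∈ s, u i)
        ≤ v.v (∑ i ∈ s.erase j, ((χ i σ : k) - (χ j σ : k)) • u i) := by
      rw [hsum, sub_eq_add_neg]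
      have h1 : v.v (φ σ (∑ i ∈ s, u i)) = v.v (∑ i ∈ s, u i) := hinv σ _
      have h2 : v.v (-((χ j σ : k) • ∑ i ∈ s, u i)) = v.v (∑ i ∈ s, u i) := by
        rw [v.neg_eq k, v.smul_eq k _ (Units.ne_zero _)]
      calc v.v (∑ i ∈ s, u i) = min (v.v (φ σ (∑ i ∈ s, u i)))
            (v.v (-((χ j σ : k) • ∑ i ∈ s, u i))) := by rw [h1, h2, min_self]
        _ ≤ _ := v.min_le_add _ _
    have hi0e : i0 ∈ s.erase j := Finset.mem_erase.mpr ⟨fun h => hji h.symm, hi0s⟩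
    have hc0 : ((χ i0 σ : k) - (χ j σ : k)) ≠ 0 :=
      sub_ne_zero.mpr (fun h => hσ (Units.ext h))
    have hle : (s.erase j).inf (fun i => v.v (((χ i σ : k) - (χ j σ : k)) • u i))
        ≤ v.v (u i0) := by
      have h := Finset.inf_le (f := fun i => v.v (((χ i σ : k) - (χ j σ : k)) • u i)) hi0e
      rwa [v.smul_eq k _ hc0] at h
    rw [hkey] at hge
    have hlt' : v.v (u i0) < v.v (∑ i ∈ s, u i) := hi0 ▸ hlt
    exact absurd (le_trans hge hle) (not_le.mpr hlt')
  · push_neg at hcard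
    have hseq : s = {i0} :=
      Finset.eq_singleton_iff_unique_mem.mpr ⟨hi0s, fun x hx => hcard x hx⟩
    rw [hseq] at hlt
    simp only [Finset.sum_singleton, Finset.inf_singleton] at hlt
    exact lt_irrefl _ hlt

end core

/-- if a finite group `G` acts on a commutative `k`-algebra `R` by
`k`-algebra automorphisms, `v` is a `G`-invariant valuation on `R`, and
`u = u_1 + ⋯ + u_m` where each `u_i` is `G`-semi-invariant with character `χ_i`, the
`χ_i` pairwise distinct, then `v(u) = min_i v(u_i)`. -/
theorem stmt11 {k R G : Type*} [Field k] [CommRing R] [Algebra k R]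
    [Group G] [Finite G]
    (φ : G →* (R ≃ₐ[k] R)) (v : ValOn R)
    (hinv : ∀ (σ : G) (x : R), v.v (φ σ x) = v.v x)
    (m : ℕ) (u : Fin m → R) (χ : Fin m → (G →* kˣ))
    (hdist : Function.Injective χ)
    (hsemi : ∀ (i : Fin m) (σ : G), φ σ (u i) = (χ i σ : k) • u i)
    (U : R) (hU : U = ∑ i, u i) :
    v.v U = ⨅ i, v.v (u i) := by
  rw [hU, stmt11_core φ v hinv Finset.univ u χ hdist hsemi, Finset.inf_eq_iInf]
  simp
end

section
/- Let k be a field, n ≥ 1, and w = (a_1, …, a_n) ∈ ℕ^n with a_i ≥ 1 for all i. Let R = k[[x_1, …, x_n]] with orthogonal valuation v_w, let I be an ideal of R, and let {f_1, …, f_m} be a v-basis of I. Then every nonzero u ∈ I can be written as u = Σ_{j=1}^m λ_j f_j with λ_j ∈ R such that v_w(λ_j) + v_w(f_j) ≥ v_w(u) for every j with λ_j ≠ 0. -/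
/-!
If `v ∈ I` has weighted order `N`, the v-basis property writes its initial form as
`∑ hⱼ in(fⱼ)`; the weight-`(N - v_w(fⱼ))` parts `gⱼ` of the `hⱼ` then satisfy
`v_w(gⱼ) + v_w(fⱼ) ≥ N` and `v_w(v - ∑ gⱼ fⱼ) > N`. Iterating this from `u` gives remainders
`Uₜ ∈ I` with `v_w(Uₜ) ≥ v_w(u) + t`, and corrections `gⱼ⁽ᵗ⁾` with
`v_w(gⱼ⁽ᵗ⁾) ≥ v_w(u) + t - v_w(fⱼ)`. Over a discrete coefficient ring both tend to zero in the
coefficientwise topology, so `λⱼ = ∑ₜ gⱼ⁽ᵗ⁾` converges, `u = ∑ λⱼ fⱼ`, and every term of `λⱼ`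
has weight at least `v_w(u) - v_w(fⱼ)`.
-/

/-- The orthogonal valuation `v_w` on `k[[x_1, …, x_n]]` associated to a weight vector
`w ∈ ℕⁿ`. -/
noncomputable def vw {k : Type*} [Field k] {n : ℕ} (w : Fin n → ℕ)
    (f : MvPowerSeries (Fin n) k) : ℕ∞ :=
  ⨅ (d : Fin n →₀ ℕ) (_ : MvPowerSeries.coeff d f ≠ 0), ((∑ i, w i * d i : ℕ) : ℕ∞)

/-- The initial form `f_v` of `f`: the sum of the terms of `f` of weight exactly
`v_w(f)` (and `0` if `f = 0`). -/
noncomputable def initialForm {k : Type*} [Field k] {n : ℕ} (w : Fin n → ℕ)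
    (f : MvPowerSeries (Fin n) k) : MvPowerSeries (Fin n) k :=
  fun d => if ((∑ i, w i * d i : ℕ) : ℕ∞) = vw w f then MvPowerSeries.coeff d f else 0

/-- The set `I_v` of initial forms of nonzero elements of an ideal `I`. -/
def initialForms {k : Type*} [Field k] {n : ℕ} (w : Fin n → ℕ)
    (I : Ideal (MvPowerSeries (Fin n) k)) : Set (MvPowerSeries (Fin n) k) :=
  {g | ∃ f ∈ I, f ≠ 0 ∧ g = initialForm w f}

open Filter Topology

theorem eq_sum_mul_of_hasSum_of_tendsto_zero {A ι : Type*} [CommRing A] [TopologicalSpace A]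
    [IsTopologicalRing A] [T2Space A] [Fintype ι] {f lam : ι → A} {U : ℕ → A}
    {G : ℕ → ι → A} (hU : ∀ t, U (t + 1) = U t - ∑ j, G t j * f j)
    (hU_tendsto : Tendsto U atTop (𝓝 0)) (hG : ∀ j, HasSum (G · j) (lam j)) :
    U 0 = ∑ j, lam j * f j := by
  have htel (T : ℕ) : ∑ t ∈ Finset.range T, ∑ j, G t j * f j = U 0 - U T := by
    induction T with
    | zero => simp
    | succ T ih => rw [Finset.sum_range_succ, ih, hU]; ring
  have hpartial := (hasSum_sum (s := Finset.univ) fun j _ => (hG j).mul_right (f j)).tendsto_sum_nat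
  simp_rw [htel] at hpartial
  refine tendsto_nhds_unique ?_ hpartial
  simpa using (tendsto_const_nhds (x := U 0)).sub hU_tendsto

theorem Finsupp.weight_eq_sum_mul {σ : Type*} [Fintype σ] (w : σ → ℕ) (d : σ →₀ ℕ) :
    Finsupp.weight w d = ∑ i, w i * d i := by
  simp [Finsupp.weight_eq_sum, mul_comm]

namespace MvPowerSeries

open WithPiTopology

variable {σ R : Type*} [CommRing R] {w : σ → ℕ}

theorem IsWeightedHomogeneous.le_weightedOrder {f : MvPowerSeries σ R} {p : ℕ}
    (hf : IsWeightedHomogeneous w f p) : (p : ℕ∞) ≤ f.weightedOrder w :=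
  MvPowerSeries.le_weightedOrder w fun _ hd => hf.coeff_eq_zero (by exact_mod_cast hd.ne)

theorem weightedHomogeneousComponent_add_mul_of_isWeightedHomogeneous
    {f g : MvPowerSeries σ R} {q : ℕ} (hg : IsWeightedHomogeneous w g q) (p : ℕ) :
    weightedHomogeneousComponent w (p + q) (f * g) = weightedHomogeneousComponent w p f * g := by
  classical
  ext d
  simp only [coeff_weightedHomogeneousComponent, coeff_mul]
  split_ifs with hd
  · refine Finset.sum_congr rfl fun x hx => ?_
    rw [Finset.HasAntidiagonal.mem_antidiagonal] at hx
    rw [← hx, map_add] at hd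
    by_cases hx2 : Finsupp.weight w x.2 = q
    · rw [if_pos (by omega)]
    · rw [hg.coeff_eq_zero hx2, mul_zero, mul_zero]
  · refine (Finset.sum_eq_zero fun x hx => ?_).symm
    rw [Finset.HasAntidiagonal.mem_antidiagonal] at hx
    rw [← hx, map_add] at hd
    split_ifs with hx1
    · rw [hg.coeff_eq_zero (by omega), mul_zero]
    · rw [zero_mul]

theorem le_weightedOrder_of_weightedHomogeneousComponent_eq_zero {f : MvPowerSeries σ R}
    {n : ℕ∞} (h : ∀ p : ℕ, (p : ℕ∞) < n → weightedHomogeneousComponent w p f = 0) :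
    n ≤ f.weightedOrder w :=
  MvPowerSeries.le_weightedOrder w fun d hd => by
    simpa [coeff_weightedHomogeneousComponent] using congrArg (coeff d) (h _ hd)

variable {f : MvPowerSeries σ R} {M : ℕ}

theorem natCast_le_weightedOrder_weightedHomogeneousComponent_sub_add
    (hM : f.weightedOrder w = M) (N : ℕ) (h : MvPowerSeries σ R) :
    (N : ℕ∞) ≤
      (weightedHomogeneousComponent w (N - M) h).weightedOrder w + f.weightedOrder w := by
  by_cases hMN : M ≤ N
  · calc (N : ℕ∞) = (N - M : ℕ) + M := by rw [← Nat.cast_add, Nat.sub_add_cancel hMN]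
      _ ≤ _ := add_le_add (IsWeightedHomogeneous.le_weightedOrder
          (isWeightedHomogeneous_weightedHomogeneousComponent w h _)) hM.ge
  · exact le_add_left (hM ▸ by exact_mod_cast (not_le.mp hMN).le)

theorem weightedHomogeneousComponent_mul_of_weightedOrder_eq
    (hM : f.weightedOrder w = M) (N : ℕ) (h : MvPowerSeries σ R) :
    weightedHomogeneousComponent w N (weightedHomogeneousComponent w (N - M) h * f) =
      weightedHomogeneousComponent w N (h * weightedHomogeneousComponent w M f) := by
  by_cases hMN : M ≤ N
  · obtain ⟨p, rfl⟩ : ∃ p, N = p + M := ⟨N - M, by omega⟩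
    rw [Nat.add_sub_cancel, weightedHomogeneousComponent_add_mul_of_isWeightedHomogeneous
      (isWeightedHomogeneous_weightedHomogeneousComponent w f M), mul_comm, add_comm,
      weightedHomogeneousComponent_add_mul_of_isWeightedHomogeneous
      (isWeightedHomogeneous_weightedHomogeneousComponent w _ p), mul_comm]
  · have hN : (N : ℕ∞) < M := by exact_mod_cast not_le.mp hMN
    have hM' : (M : ℕ∞) ≤ (weightedHomogeneousComponent w M f).weightedOrder w :=
      IsWeightedHomogeneous.le_weightedOrder
        (isWeightedHomogeneous_weightedHomogeneousComponent w f M)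
    rw [weightedHomogeneousComponent_of_lt_weightedOrder_eq_zero,
      weightedHomogeneousComponent_of_lt_weightedOrder_eq_zero]
    · exact hN.trans_le <| (hM'.trans le_add_self).trans (le_weightedOrder_mul w)
    · exact hN.trans_le <| (hM.ge.trans le_add_self).trans (le_weightedOrder_mul w)

theorem summable_of_natCast_le_weightedOrder_add [TopologicalSpace R]
    {F : ℕ → MvPowerSeries σ R} {c : ℕ}
    (h : ∀ t : ℕ, (t : ℕ∞) ≤ (F t).weightedOrder w + c) :
    Summable F := by
  refine summable_of_tendsto_weightedOrder_atTop_nhds_top (w := w) <|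
    ENat.tendsto_nhds_top_iff_natCast_lt.mpr fun N =>
      eventually_atTop.mpr ⟨N + c + 1, fun t ht => ?_⟩
  by_contra! H
  have : ((N + c + 1 : ℕ) : ℕ∞) ≤ N + c :=
    (Nat.cast_le.mpr ht).trans ((h t).trans (add_le_add_left H _))
  norm_cast at this
  omega

theorem le_weightedOrder_add_of_hasSum [TopologicalSpace R] [T2Space R] {ι : Type*}
    {F : ι → MvPowerSeries σ R} {s : MvPowerSeries σ R} (hF : HasSum F s) {b c : ℕ∞}
    (h : ∀ i, b ≤ (F i).weightedOrder w + c) : b ≤ s.weightedOrder w + c := by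
  refine le_tsub_add.trans (add_le_add_left ?_ c)
  refine MvPowerSeries.le_weightedOrder w fun d hd => ?_
  have hzero : (fun i => coeff d (F i)) = 0 := funext fun i =>
    coeff_eq_zero_of_lt_weightedOrder w (hd.trans_le (tsub_le_iff_right.mpr (h i)))
  exact (hasSum_iff_hasSum_coeff.mp hF d).unique (hzero ▸ hasSum_zero)

theorem exists_eq_sum_mul_of_forall_exists_add_one_le_weightedOrder_sub {ι : Type*}
    [Fintype ι] {I : Ideal (MvPowerSeries σ R)} {f : ι → MvPowerSeries σ R}
    (hfI : ∀ j, f j ∈ I) (hf : ∀ j, f j ≠ 0)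
    (step : ∀ v ∈ I, ∃ g : ι → MvPowerSeries σ R,
      (∀ j, v.weightedOrder w ≤ (g j).weightedOrder w + (f j).weightedOrder w) ∧
        v.weightedOrder w + 1 ≤ (v - ∑ j, g j * f j).weightedOrder w)
    {u : MvPowerSeries σ R} (hu : u ∈ I) :
    ∃ lam : ι → MvPowerSeries σ R, u = ∑ j, lam j * f j ∧
      ∀ j, u.weightedOrder w ≤ (lam j).weightedOrder w + (f j).weightedOrder w := by
  let : TopologicalSpace R := ⊥
  have : DiscreteTopology R := ⟨rfl⟩
  choose! g hg_le hg_lt using step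
  obtain ⟨U, hU_zero, hU_succ⟩ : ∃ U : ℕ → MvPowerSeries σ R,
      U 0 = u ∧ ∀ t, U (t + 1) = U t - ∑ j, g (U t) j * f j :=
    ⟨fun t => Nat.rec u (fun _ v => v - ∑ j, g v j * f j) t, rfl, fun _ => rfl⟩
  have hUI (t : ℕ) : U t ∈ I := by
    induction t with
    | zero => exact hU_zero ▸ hu
    | succ t ih =>
      rw [hU_succ]
      exact I.sub_mem ih (I.sum_mem fun j _ => I.mul_mem_left _ (hfI j))
  have hU_order (t : ℕ) : u.weightedOrder w + t ≤ (U t).weightedOrder w := by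
    induction t with
    | zero => simp [hU_zero]
    | succ t ih =>
      calc u.weightedOrder w + (t + 1 : ℕ) = u.weightedOrder w + t + 1 := by push_cast; ring
        _ ≤ (U t).weightedOrder w + 1 := by gcongr
        _ ≤ (U (t + 1)).weightedOrder w := by rw [hU_succ]; exact hg_lt _ (hUI t)
  have hG (t : ℕ) (j : ι) :
      u.weightedOrder w + t ≤ (g (U t) j).weightedOrder w + (f j).weightedOrder w :=
    (hU_order t).trans (hg_le _ (hUI t) j)
  choose M hM using fun j =>
    ENat.ne_top_iff_exists.mp ((weightedOrder_eq_top_iff w).not.mpr (hf j))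
  have hlam (j : ι) : HasSum (fun t => g (U t) j) (∑' t, g (U t) j) := by
    refine (summable_of_natCast_le_weightedOrder_add (w := w) (c := M j) fun t => ?_).hasSum
    rw [hM j]
    exact le_add_self.trans (hG t j)
  have hU_summable : Summable U :=
    summable_of_natCast_le_weightedOrder_add (w := w) (c := 0) fun t => by
      rw [Nat.cast_zero, add_zero]
      exact le_add_self.trans (hU_order t)
  refine ⟨fun j => ∑' t, g (U t) j,
    hU_zero ▸ eq_sum_mul_of_hasSum_of_tendsto_zero hU_succ hU_summable.tendsto_atTop_zero hlam,
    fun j => le_weightedOrder_add_of_hasSum (hlam j) fun t => le_self_add.trans (hG t j)⟩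

end MvPowerSeries

section InitialForm

open MvPowerSeries

variable {k : Type*} [Field k] {n : ℕ} {w : Fin n → ℕ}

theorem vw_eq_weightedOrder (f : MvPowerSeries (Fin n) k) : vw w f = f.weightedOrder w := by
  refine le_antisymm (le_weightedOrder w fun d hd => ?_)
    (le_iInf₂ fun d hd => Finsupp.weight_eq_sum_mul w d ▸ weightedOrder_le w hd)
  by_contra h
  exact (iInf₂_le d h : vw w f ≤ _).not_gt (by rwa [← Finsupp.weight_eq_sum_mul])

theorem initialForm_eq_weightedHomogeneousComponent {f : MvPowerSeries (Fin n) k} {N : ℕ}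
    (hN : f.weightedOrder w = N) : initialForm w f = weightedHomogeneousComponent w N f := by
  ext d
  rw [coeff_weightedHomogeneousComponent]
  show (if _ then _ else _) = _
  simp only [← Finsupp.weight_eq_sum_mul, vw_eq_weightedOrder, hN, Nat.cast_inj]

theorem initialForm_zero : initialForm w (0 : MvPowerSeries (Fin n) k) = 0 := by
  ext d
  show (if _ then _ else _) = _
  simp

theorem initialForm_mem_span_initialForms {I : Ideal (MvPowerSeries (Fin n) k)}
    {v : MvPowerSeries (Fin n) k} (hv : v ∈ I) :
    initialForm w v ∈ Ideal.span (initialForms w I) := by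
  by_cases hv0 : v = 0
  · rw [hv0, initialForm_zero]
    exact zero_mem _
  · exact Ideal.subset_span ⟨v, hv, hv0, rfl⟩

theorem exists_add_one_le_weightedOrder_sub_sum_mul {ι : Type*} [Fintype ι]
    {f : ι → MvPowerSeries (Fin n) k} (hf : ∀ j, f j ≠ 0) {v : MvPowerSeries (Fin n) k}
    (hv : initialForm w v ∈ Ideal.span (Set.range fun j => initialForm w (f j))) :
    ∃ g : ι → MvPowerSeries (Fin n) k,
      (∀ j, v.weightedOrder w ≤ (g j).weightedOrder w + (f j).weightedOrder w) ∧
        v.weightedOrder w + 1 ≤ (v - ∑ j, g j * f j).weightedOrder w := by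
  by_cases hv0 : v = 0
  · exact ⟨0, by simp [hv0], by simp [hv0]⟩
  obtain ⟨N, hN⟩ := ENat.ne_top_iff_exists.mp ((weightedOrder_eq_top_iff w).not.mpr hv0)
  choose M hM using fun j =>
    ENat.ne_top_iff_exists.mp ((weightedOrder_eq_top_iff w).not.mpr (hf j))
  simp only [initialForm_eq_weightedHomogeneousComponent hN.symm,
    fun j => initialForm_eq_weightedHomogeneousComponent (hM j).symm] at hv
  obtain ⟨h, hh⟩ := (Submodule.mem_span_range_iff_exists_fun _).mp hv
  set g := fun j => weightedHomogeneousComponent w (N - M j) (h j)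
  have hg (j : ι) : (N : ℕ∞) ≤ (g j).weightedOrder w + (f j).weightedOrder w :=
    natCast_le_weightedOrder_weightedHomogeneousComponent_sub_add (hM j).symm N (h j)
  refine ⟨g, fun j => hN ▸ hg j, ?_⟩
  rw [← hN]
  refine le_weightedOrder_of_weightedHomogeneousComponent_eq_zero fun p hp => ?_
  rw [map_sub, map_sum]
  rcases (Nat.lt_succ_iff.mp (by exact_mod_cast hp)).lt_or_eq with hlt | rfl
  · have hlt : (p : ℕ∞) < N := Nat.cast_lt.mpr hlt
    rw [weightedHomogeneousComponent_of_lt_weightedOrder_eq_zero (hN ▸ hlt),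
      Finset.sum_eq_zero fun j _ => weightedHomogeneousComponent_of_lt_weightedOrder_eq_zero
        (hlt.trans_le ((hg j).trans (le_weightedOrder_mul w))), sub_zero]
  · rw [Finset.sum_congr rfl fun j _ =>
      weightedHomogeneousComponent_mul_of_weightedOrder_eq (hM j).symm p (h j), ← map_sum]
    simp only [smul_eq_mul] at hh
    rw [hh, ← isWeightedHomogeneous_iff_eq_weightedHomogeneousComponent.mp
      (isWeightedHomogeneous_weightedHomogeneousComponent w v p), sub_self]

end InitialForm

theorem stmt15_general {k : Type*} [Field k] {n : ℕ} (w : Fin n → ℕ)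
    (I : Ideal (MvPowerSeries (Fin n) k))
    (m : ℕ) (f : Fin m → MvPowerSeries (Fin n) k)
    (hfI : ∀ i, f i ∈ I) (hf0 : ∀ i, f i ≠ 0)
    (hvbasis : Ideal.span (Set.range fun i => initialForm w (f i)) =
      Ideal.span (initialForms w I))
    (u : MvPowerSeries (Fin n) k) (huI : u ∈ I) :
    ∃ lam : Fin m → MvPowerSeries (Fin n) k,
      u = ∑ j, lam j * f j ∧
      ∀ j, lam j ≠ 0 → vw w u ≤ vw w (lam j) + vw w (f j) := by
  have step (v : MvPowerSeries (Fin n) k) (hv : v ∈ I) :=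
    exists_add_one_le_weightedOrder_sub_sum_mul hf0
      (hvbasis ▸ initialForm_mem_span_initialForms hv)
  obtain ⟨lam, hu, hlam⟩ :=
    MvPowerSeries.exists_eq_sum_mul_of_forall_exists_add_one_le_weightedOrder_sub hfI hf0 step huI
  exact ⟨lam, hu, fun j _ => by simpa only [vw_eq_weightedOrder] using hlam j⟩

/-- if all the weights are `≥ 1` and `{f_1, …, f_m}` is a v-basis of an
ideal `I` of `k[[x_1, …, x_n]]`, then every nonzero `u ∈ I` can be written as
`u = Σ_j λ_j f_j` with `v_w(λ_j) + v_w(f_j) ≥ v_w(u)` whenever `λ_j ≠ 0`. -/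
theorem stmt15 {k : Type*} [Field k] {n : ℕ} (hn : 1 ≤ n) (w : Fin n → ℕ)
    (hw : ∀ i, 1 ≤ w i)
    (I : Ideal (MvPowerSeries (Fin n) k))
    (m : ℕ) (f : Fin m → MvPowerSeries (Fin n) k)
    (hfI : ∀ i, f i ∈ I) (hf0 : ∀ i, f i ≠ 0)
    (hgen : Ideal.span (Set.range f) = I)
    (hvbasis : Ideal.span (Set.range fun i => initialForm w (f i)) =
      Ideal.span (initialForms w I))
    (u : MvPowerSeries (Fin n) k) (huI : u ∈ I) (hu0 : u ≠ 0) :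
    ∃ lam : Fin m → MvPowerSeries (Fin n) k,
      u = ∑ j, lam j * f j ∧
      ∀ j, lam j ≠ 0 → vw w u ≤ vw w (lam j) + vw w (f j) :=
  stmt15_general w I m f hfI hf0 hvbasis u huI
end
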